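/- arXiv:2403.00186 — 2 statements merged into one kernel-verified Lean document; each statement's English description precedes it below -/
import Mathlib

section
/- Let f be a continuous strictly positive probability density with CDF F bijective from ℝ onto (0,1), K a kernel with supp(K) = [-1,1] and K ∈ L¹, Δ > 0, κ ∈ (0,1), Δ₀ = κ(F(-Δ) ∧ (1-F(Δ))), and f₁ > 0 a lower bound of f on I := [F⁻¹((1-κ)F(-Δ)), F⁻¹(κ+(1-κ)F(Δ))]. Then for every h ∈ (0, Δ₀], every a, b ∈ ℝ and every x ∈ [-Δ,Δ], |∫_a^b K_h(F(z) - F(x)) dz| ≤ ‖K‖₁ / f₁. -/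
/-!
On the support of the integrand, `|F z - F x| ≤ h`, and the localization lemma puts `z` in the
interval where `f ≥ f₁`. There the integrand is at most `f z / f₁` times the rescaled kernel
`h⁻¹ |K ((F z - F x) / h)|`, and the substitution `u = F z` (with `F' = f`) turns the integral of
the latter against `f` into at most `‖K‖₁`.
-/

open MeasureTheory Set
open scoped Interval

theorem hasDerivAt_integral_Iic {f : ℝ → ℝ} (hcont : Continuous f) (hint : Integrable f)
    (x : ℝ) : HasDerivAt (fun y => ∫ z in Iic y, f z) (f x) x := by
  have hsplit : (fun y => ∫ z in Iic y, f z) = fun y => (∫ z in Iic 0, f z) + ∫ z in 0..y, f z :=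
    funext fun y => eq_add_of_sub_eq'
      (intervalIntegral.integral_Iic_sub_Iic hint.integrableOn hint.integrableOn)
  rw [hsplit]
  exact (hcont.integral_hasStrictDerivAt 0 x).hasDerivAt.const_add _

theorem MeasureTheory.Integrable.inv_mul_comp_sub_div {g : ℝ → ℝ} (hg : Integrable g) (c : ℝ)
    {h : ℝ} (hh : h ≠ 0) : Integrable fun u => h⁻¹ * g ((u - c) / h) :=
  ((hg.comp_div hh).comp_sub_right c).const_mul _

theorem integral_inv_mul_comp_sub_div (g : ℝ → ℝ) (c : ℝ) {h : ℝ} (hh : 0 < h) :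
    ∫ u, h⁻¹ * g ((u - c) / h) = ∫ u, g u := by
  rw [integral_const_mul, integral_sub_right_eq_self (fun u => g (u / h)) c,
    Measure.integral_comp_div, abs_of_pos hh, smul_eq_mul, inv_mul_cancel_left₀ hh.ne']

theorem integral_abs_deriv_mul_comp_le {F F' ψ : ℝ → ℝ} (hF : ∀ z, HasDerivAt F (F' z) z)
    (hinj : Function.Injective F) (hψ : Integrable ψ) (hψ_nonneg : 0 ≤ ψ) :
    Integrable (fun z => |F' z| * ψ (F z)) ∧ ∫ z, |F' z| * ψ (F z) ≤ ∫ u, ψ u := by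
  have hF' : ∀ z ∈ univ, HasDerivWithinAt F (F' z) univ z := fun z _ => (hF z).hasDerivWithinAt
  constructor
  · rw [← integrableOn_univ]
    simpa only [smul_eq_mul] using (integrableOn_image_iff_integrableOn_abs_deriv_smul
      MeasurableSet.univ hF' hinj.injOn ψ).mp hψ.integrableOn
  · have hchange := integral_image_eq_integral_abs_deriv_smul MeasurableSet.univ hF' hinj.injOn ψ
    simp only [setIntegral_univ, smul_eq_mul] at hchange
    exact hchange ▸ setIntegral_le_integral hψ (ae_of_all _ hψ_nonneg)

theorem abs_intervalIntegral_le_integral {g G : ℝ → ℝ} (hG : Integrable G)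
    (hgG : ∀ z, |g z| ≤ G z) (a b : ℝ) : |∫ z in a..b, g z| ≤ ∫ z, G z :=
  calc |∫ z in a..b, g z| = ‖∫ z in Ι a b, g z‖ :=
        intervalIntegral.abs_integral_eq_abs_integral_uIoc g
    _ ≤ ∫ z in Ι a b, G z := norm_integral_le_of_norm_le hG.integrableOn (ae_of_all _ hgG)
    _ ≤ ∫ z, G z :=
        setIntegral_le_integral hG (ae_of_all _ fun z => (abs_nonneg _).trans (hgG z))

theorem abs_sub_le_of_kernel_ne_zero {K : ℝ → ℝ}
    (hK_supp : ∀ u, u ∉ Icc (-1 : ℝ) 1 → K u = 0) {h y c : ℝ} (hh : 0 < h)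
    (hne : K ((y - c) / h) ≠ 0) : |y - c| ≤ h := by
  have hmem : (y - c) / h ∈ Icc (-1 : ℝ) 1 := not_not.mp (mt (hK_supp _) hne)
  rwa [mem_Icc, ← abs_le, abs_div, abs_of_pos hh, div_le_one hh] at hmem

/-- The localization lemma, with `Δ₀ = κ * min (F (-Δ)) (1 - F Δ)` and `I` the interval in the
conclusion. -/
theorem mem_Icc_of_abs_sub_le {F Finv : ℝ → ℝ} {Δ κ h x z : ℝ} (hF : StrictMono F)
    (hF01 : ∀ x, F x ∈ Ioo (0 : ℝ) 1) (hFinv' : ∀ y ∈ Ioo (0 : ℝ) 1, F (Finv y) = y)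
    (hκ : κ ∈ Ioo (0 : ℝ) 1) (hh : h ≤ κ * min (F (-Δ)) (1 - F Δ)) (hx : x ∈ Icc (-Δ) Δ)
    (hz : |F z - F x| ≤ h) :
    z ∈ Icc (Finv ((1 - κ) * F (-Δ))) (Finv (κ + (1 - κ) * F Δ)) := by
  obtain ⟨hκ0, hκ1⟩ := hκ
  obtain ⟨hFl0, hFl1⟩ := hF01 (-Δ)
  obtain ⟨hFr0, hFr1⟩ := hF01 Δ
  have hxl : F (-Δ) ≤ F x := hF.monotone hx.1
  have hxr : F x ≤ F Δ := hF.monotone hx.2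
  have hhl : h ≤ κ * F (-Δ) := hh.trans (by gcongr; exact min_le_left _ _)
  have hhr : h ≤ κ * (1 - F Δ) := hh.trans (by gcongr; exact min_le_right _ _)
  obtain ⟨hzl, hzr⟩ := abs_le.mp hz
  constructor
  · rw [← hF.le_iff_le, hFinv' _ ⟨by nlinarith, by nlinarith⟩]
    nlinarith
  · rw [← hF.le_iff_le, hFinv' _ ⟨by nlinarith, by nlinarith⟩]
    nlinarith

theorem warped_endpoint_integral_bound_general (f K F Finv : ℝ → ℝ) (Δ κ f₁ : ℝ)
    (hf_pos : ∀ x, 0 < f x) (hf_cont : Continuous f)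
    (hf_int : Integrable f)
    (hF : ∀ x, F x = ∫ z in Set.Iic x, f z)
    (hF_bij : Set.BijOn F Set.univ (Set.Ioo (0:ℝ) 1))
    (hFinv' : ∀ y ∈ Set.Ioo (0:ℝ) 1, F (Finv y) = y)
    (hK_supp : ∀ u, u ∉ Set.Icc (-1:ℝ) 1 → K u = 0)
    (hK_int : Integrable K)
    (hκ : κ ∈ Set.Ioo (0:ℝ) 1)
    (hf₁ : 0 < f₁)
    (hf_lb : ∀ z ∈ Set.Icc (Finv ((1 - κ) * F (-Δ))) (Finv (κ + (1 - κ) * F Δ)),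
      f₁ ≤ f z) :
    ∀ h ∈ Set.Ioc (0:ℝ) (κ * min (F (-Δ)) (1 - F Δ)), ∀ a b : ℝ,
      ∀ x ∈ Set.Icc (-Δ) Δ,
      |∫ z in a..b, h⁻¹ * K ((F z - F x) / h)| ≤ (∫ u, |K u|) / f₁ := by
  intro h ⟨hh0, hhΔ⟩ a b x hx
  have hFderiv : ∀ z, HasDerivAt F (f z) z := by
    simpa only [← funext hF] using hasDerivAt_integral_Iic hf_cont hf_int
  have hFmono : StrictMono F := strictMono_of_hasDerivAt_pos hFderiv hf_pos
  set ψ : ℝ → ℝ := fun u => h⁻¹ * |K ((u - F x) / h)|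
  have hψ_nonneg : 0 ≤ ψ := fun u => by positivity
  have hF01 : ∀ z, F z ∈ Ioo (0 : ℝ) 1 := fun z => hF_bij.mapsTo (mem_univ z)
  obtain ⟨hcomp_int, hcomp_le⟩ := integral_abs_deriv_mul_comp_le hFderiv hFmono.injective
    (hK_int.abs.inv_mul_comp_sub_div (F x) hh0.ne') hψ_nonneg
  have hpointwise : ∀ z, |h⁻¹ * K ((F z - F x) / h)| ≤ |f z| * ψ (F z) / f₁ := fun z => by
    by_cases hK0 : K ((F z - F x) / h) = 0
    · rw [hK0, mul_zero, abs_zero]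
      exact div_nonneg (mul_nonneg (abs_nonneg _) (hψ_nonneg _)) hf₁.le
    have hz : |F z - F x| ≤ h := abs_sub_le_of_kernel_ne_zero hK_supp hh0 hK0
    have hfz : f₁ ≤ |f z| :=
      (hf_lb z (mem_Icc_of_abs_sub_le hFmono hF01 hFinv' hκ hhΔ hx hz)).trans (le_abs_self _)
    rw [abs_mul, abs_of_pos (inv_pos.mpr hh0), le_div_iff₀ hf₁, mul_comm]
    exact mul_le_mul_of_nonneg_right hfz (hψ_nonneg _)
  calc |∫ z in a..b, h⁻¹ * K ((F z - F x) / h)|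
      ≤ ∫ z, |f z| * ψ (F z) / f₁ :=
        abs_intervalIntegral_le_integral (hcomp_int.div_const _) hpointwise a b
    _ ≤ (∫ u, ψ u) / f₁ := by rw [integral_div]; gcongr
    _ = (∫ u, |K u|) / f₁ := by rw [integral_inv_mul_comp_sub_div (fun u => |K u|) (F x) hh0]

/-- `|∫_a^b K_h(F(z)-F(x)) dz| ≤ ‖K‖₁ / f₁` for `x ∈ [-Δ,Δ]`,
`h ∈ (0,Δ₀]`. -/
theorem warped_endpoint_integral_bound (f K F Finv : ℝ → ℝ) (Δ κ f₁ : ℝ)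
    (hf_pos : ∀ x, 0 < f x) (hf_cont : Continuous f)
    (hf_int : Integrable f) (hf_one : (∫ x, f x) = 1)
    (hF : ∀ x, F x = ∫ z in Set.Iic x, f z)
    (hF_bij : Set.BijOn F Set.univ (Set.Ioo (0:ℝ) 1))
    (hFinv : ∀ x, Finv (F x) = x)
    (hFinv' : ∀ y ∈ Set.Ioo (0:ℝ) 1, F (Finv y) = y)
    (hK_supp : ∀ u, u ∉ Set.Icc (-1:ℝ) 1 → K u = 0)
    (hK_int : Integrable K)
    (hΔ : 0 < Δ) (hκ : κ ∈ Set.Ioo (0:ℝ) 1)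
    (hf₁ : 0 < f₁)
    (hf_lb : ∀ z ∈ Set.Icc (Finv ((1 - κ) * F (-Δ))) (Finv (κ + (1 - κ) * F Δ)),
      f₁ ≤ f z) :
    ∀ h ∈ Set.Ioc (0:ℝ) (κ * min (F (-Δ)) (1 - F Δ)), ∀ a b : ℝ,
      ∀ x ∈ Set.Icc (-Δ) Δ,
      |∫ z in a..b, h⁻¹ * K ((F z - F x) / h)| ≤ (∫ u, |K u|) / f₁ :=
  warped_endpoint_integral_bound_general f K F Finv Δ κ f₁ hf_pos hf_cont hf_int hF hF_bij hFinv'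
    hK_supp hK_int hκ hf₁ hf_lb
end

section
/- Let b : ℝ → ℝ be bounded on I and f a strictly positive continuous density with CDF F bijective onto (0,1), f ≥ f₁ > 0 on I, with K supported in [-1,1], δ supported in [-Δ,Δ], ‖δ‖₁ ≤ 1 wlog; define ψ_{h,h'}(x) := [K_h ∗ ((b_{h'}·δ/f)∘F⁻¹ · 𝟙_{(0,1)})](F(x)). Then ∫_ℝ |ψ_{h,h'}(x)| dx ≤ ‖K‖₁² (sup_{z∈I}|b(z)|)/f₁ for all h, h' ∈ (0, Δ₀], where Δ₀ = κ(F(-Δ)∧(1-F(Δ))) and I := [F⁻¹((1-κ)F(-Δ)), F⁻¹(κ+(1-κ)F(Δ))]. -/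
/-!
Write `ψ_{h,h'} = φ ∘ F` with `φ = K_h ∗ ((b_{h'}·δ/f)∘F⁻¹ · 𝟙_(0,1))`; the substitution
`u = F x` turns `∫ |ψ_{h,h'}|` into `∫_{(0,1)} |φ(u)| / f(F⁻¹ u) du`.
Since `K` lives on `[-1,1]`, `δ` on `[-Δ,Δ]` and `h, h' ≤ Δ₀`, only points `u, y'` in
`[(1-κ) F(-Δ), κ + (1-κ) F(Δ)]`, i.e. with `F⁻¹ u, F⁻¹ y' ∈ I`, contribute; there `f ≥ f₁` and
`|b| ≤ M`, so `|b_{h'}| ≤ ‖K‖₁ M` on the support of `δ`. Tonelli then bounds what is left by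
`‖K‖₁ ∫_{(0,1)} |δ(F⁻¹ y)| / f(F⁻¹ y) dy = ‖K‖₁ ‖δ‖₁ ≤ ‖K‖₁`.
-/

open MeasureTheory Set Function
open scoped ENNReal

theorem hasDerivAt_setIntegral_Iic {f : ℝ → ℝ} (hf : Integrable f) {x : ℝ}
    (hfx : ContinuousAt f x) : HasDerivAt (fun x => ∫ t in Iic x, f t) (f x) x := by
  have hshift : (fun x => ∫ t in Iic x, f t) =
      fun x => (∫ t in Iic 0, f t) + ∫ t in (0)..x, f t := by
    funext u
    rw [← intervalIntegral.integral_Iic_sub_Iic hf.integrableOn hf.integrableOn]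
    ring
  rw [hshift]
  exact (intervalIntegral.integral_hasDerivAt_right hf.intervalIntegrable
    hf.aestronglyMeasurable.stronglyMeasurableAtFilter hfx).const_add _

theorem integral_abs_le_of_lintegral_ofReal_abs_le {α : Type*} [MeasurableSpace α]
    {μ : Measure α} {φ : α → ℝ} {B : ℝ} (hB : 0 ≤ B)
    (h : ∫⁻ x, ENNReal.ofReal |φ x| ∂μ ≤ ENNReal.ofReal B) : ∫ x, |φ x| ∂μ ≤ B := by
  refine (Real.le_norm_self _).trans <| (norm_integral_le_lintegral_norm _).trans <|
    ENNReal.toReal_le_of_le_ofReal hB ?_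
  simpa only [Real.norm_eq_abs, abs_abs] using h

theorem ofReal_abs_integral_mul_le {α : Type*} [MeasurableSpace α] {μ : Measure α}
    {k g B : α → ℝ} (h : ∀ᵐ y ∂μ, k y ≠ 0 → |g y| ≤ B y) :
    ENNReal.ofReal |∫ y, k y * g y ∂μ| ≤
      ∫⁻ y, ENNReal.ofReal |k y| * ENNReal.ofReal (B y) ∂μ := by
  rw [← Real.norm_eq_abs, ofReal_norm]
  refine (enorm_integral_le_lintegral_enorm _).trans (lintegral_mono_ae (h.mono fun y hy => ?_))
  by_cases hk : k y = 0
  · simp [hk]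
  rw [← ofReal_norm, Real.norm_eq_abs, abs_mul, ← ENNReal.ofReal_mul (abs_nonneg _)]
  exact ENNReal.ofReal_le_ofReal (mul_le_mul_of_nonneg_left (hy hk) (abs_nonneg _))

theorem lintegral_lintegral_sub_mul {G : Type*} [MeasurableSpace G] [AddGroup G]
    [MeasurableAdd₂ G] [MeasurableNeg G] (μ ν : Measure G) [SFinite μ] [SFinite ν]
    [μ.IsAddRightInvariant] {k g : G → ℝ≥0∞} (hk : AEMeasurable k μ) (hg : AEMeasurable g ν) :
    ∫⁻ x, ∫⁻ y, k (x - y) * g y ∂ν ∂μ = (∫⁻ x, k x ∂μ) * ∫⁻ y, g y ∂ν := by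
  have hmeas : AEMeasurable (uncurry fun x y => k (x - y) * g y) (μ.prod ν) :=
    (hk.comp_quasiMeasurePreserving (quasiMeasurePreserving_sub_of_right_invariant μ ν)).mul
      (hg.comp_quasiMeasurePreserving Measure.quasiMeasurePreserving_snd)
  rw [lintegral_lintegral_swap hmeas, ← lintegral_const_mul'' _ hg]
  refine lintegral_congr fun y => ?_
  rw [lintegral_mul_const'' _ (f := fun x => k (x - y)) (hk.comp_quasiMeasurePreserving
    (measurePreserving_sub_right μ y).quasiMeasurePreserving), lintegral_sub_right_eq_self]

section Reparametrization

variable {F F' Finv : ℝ → ℝ}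

theorem lintegral_ofReal_comp_eq_setLIntegral_range (hF : ∀ x, HasDerivAt F (F' x) x)
    (hF' : ∀ x, 0 < F' x) (hinv : LeftInverse Finv F) (φ : ℝ → ℝ) :
    ∫⁻ x, ENNReal.ofReal (φ (F x)) = ∫⁻ u in range F, ENNReal.ofReal (φ u / F' (Finv u)) := by
  rw [← image_univ, lintegral_image_eq_lintegral_abs_deriv_mul MeasurableSet.univ
    (fun x _ => (hF x).hasDerivWithinAt) hinv.injective.injOn, Measure.restrict_univ]
  refine lintegral_congr fun x => ?_
  rw [hinv x, abs_of_pos (hF' x), ← ENNReal.ofReal_mul (hF' x).le,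
    mul_div_cancel₀ _ (hF' x).ne']

theorem AEMeasurable.comp_of_rightInvOn {g : ℝ → ℝ} {s : Set ℝ} (hs : MeasurableSet s)
    (hF : Differentiable ℝ F) (hinv : ∀ y ∈ s, F (Finv y) = y) (hg : AEMeasurable g)
    (hFinv : AEMeasurable Finv (volume.restrict s)) :
    AEMeasurable (g ∘ Finv) (volume.restrict s) := by
  have hac : (volume.restrict s).map Finv ≪ volume := by
    refine Measure.AbsolutelyContinuous.mk fun N hN hN0 => ?_
    rw [Measure.map_apply_of_aemeasurable hFinv hN, Measure.restrict_apply' hs]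
    refine measure_mono_null ?_ (addHaar_image_eq_zero_of_differentiableOn_of_addHaar_eq_zero
      volume hF.differentiableOn hN0)
    exact fun y ⟨hyN, hys⟩ => ⟨Finv y, hyN, hinv y hys⟩
  exact (hg.mono_ac hac).comp_aemeasurable hFinv

theorem aemeasurable_abs_comp_div_deriv (hF : ∀ x, HasDerivAt F (F' x) x)
    (hF' : ∀ x, 0 < F' x) (hinv : LeftInverse Finv F) {δ : ℝ → ℝ} (hδ : AEMeasurable δ) :
    AEMeasurable (fun y => |δ (Finv y)| / F' (Finv y)) (volume.restrict (range F)) := by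
  have hFc : Continuous F := continuous_iff_continuousAt.2 fun x => (hF x).continuousAt
  have hs : MeasurableSet (range F) :=
    measurableSet_range_of_continuous_injective hFc hinv.injective
  have hmono : MonotoneOn Finv (range F) := by
    rintro _ ⟨x, rfl⟩ _ ⟨x', rfl⟩ hxx'
    rw [hinv x, hinv x']
    exact (strictMono_of_hasDerivAt_pos hF hF').le_iff_le.1 hxx'
  have hFinv := aemeasurable_restrict_of_monotoneOn (μ := volume) hs hmono
  have hF'm : Measurable F' := by
    rw [show F' = deriv F from funext fun x => (hF x).deriv.symm]
    exact measurable_deriv F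
  refine (hδ.comp_of_rightInvOn hs (fun x => (hF x).differentiableAt) ?_ hFinv).abs.div
    (hF'm.comp_aemeasurable hFinv)
  rintro _ ⟨x, rfl⟩
  rw [hinv x]

theorem setLIntegral_range_ofReal_abs_comp_div_deriv (hF : ∀ x, HasDerivAt F (F' x) x)
    (hF' : ∀ x, 0 < F' x) (hinv : LeftInverse Finv F) {δ : ℝ → ℝ} (hδ : Integrable δ) :
    ∫⁻ y in range F, ENNReal.ofReal (|δ (Finv y)| / F' (Finv y)) =
      ENNReal.ofReal (∫ x, |δ x|) := by
  rw [← lintegral_ofReal_comp_eq_setLIntegral_range hF hF' hinv fun u => |δ (Finv u)|]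
  simp only [hinv _]
  exact (ofReal_integral_eq_lintegral_ofReal hδ.abs (ae_of_all _ fun _ => abs_nonneg _)).symm

theorem finv_mem_Icc_of_abs_sub_le (hF : StrictMono F) (hF01 : ∀ x, F x ∈ Ioo (0 : ℝ) 1)
    (hinv : ∀ y ∈ Ioo (0 : ℝ) 1, F (Finv y) = y) {Δ κ : ℝ} (hκ0 : 0 ≤ κ) (hκ1 : κ < 1)
    ⦃z t c : ℝ⦄ (hz : z ∈ Icc (-Δ) Δ) (hzt : |F z - t| ≤ c)
    (hc : c ≤ κ * min (F (-Δ)) (1 - F Δ)) :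
    Finv t ∈ Icc (Finv ((1 - κ) * F (-Δ))) (Finv (κ + (1 - κ) * F Δ)) := by
  obtain ⟨ha0, ha1⟩ := hF01 (-Δ)
  obtain ⟨hb0, hb1⟩ := hF01 Δ
  have hFz : F (-Δ) ≤ F z ∧ F z ≤ F Δ := ⟨hF.monotone hz.1, hF.monotone hz.2⟩
  have hca : c ≤ κ * F (-Δ) := hc.trans (mul_le_mul_of_nonneg_left (min_le_left _ _) hκ0)
  have hcb : c ≤ κ * (1 - F Δ) := hc.trans (mul_le_mul_of_nonneg_left (min_le_right _ _) hκ0)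
  obtain ⟨hzt₁, hzt₂⟩ := abs_le.1 hzt
  have hα : (1 - κ) * F (-Δ) ∈ Ioo (0 : ℝ) 1 := ⟨by nlinarith, by nlinarith⟩
  have hβ : κ + (1 - κ) * F Δ ∈ Ioo (0 : ℝ) 1 := ⟨by nlinarith, by nlinarith⟩
  have ht : t ∈ Ioo (0 : ℝ) 1 := ⟨by nlinarith, by nlinarith⟩
  constructor
  · rw [← hF.le_iff_le, hinv _ hα, hinv _ ht]; linarith
  · rw [← hF.le_iff_le, hinv _ ht, hinv _ hβ]; linarith

end Reparametrization

noncomputable def kernelScale (K : ℝ → ℝ) (c t : ℝ) : ℝ := c⁻¹ * K (t / c)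

section kernelScale

variable {K : ℝ → ℝ} {c : ℝ}

theorem MeasureTheory.Integrable.kernelScale (hK : Integrable K) (hc : c ≠ 0) :
    Integrable (kernelScale K c) :=
  (hK.comp_div hc).const_mul c⁻¹

theorem integral_abs_kernelScale (hc : c ≠ 0) :
    ∫ t, |kernelScale K c t| = ∫ t, |K t| := by
  simp only [kernelScale, abs_mul, abs_inv]
  rw [integral_const_mul, Measure.integral_comp_div (fun t => |K t|), smul_eq_mul,
    inv_mul_cancel_left₀ (abs_ne_zero.2 hc)]

theorem lintegral_ofReal_abs_kernelScale (hK : Integrable K) (hc : c ≠ 0) :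
    ∫⁻ t, ENNReal.ofReal |kernelScale K c t| = ENNReal.ofReal (∫ t, |K t|) := by
  rw [← integral_abs_kernelScale hc, ofReal_integral_eq_lintegral_ofReal
    (hK.kernelScale hc).abs (ae_of_all _ fun _ => abs_nonneg _)]

theorem abs_le_of_apply_div_ne_zero (hK : ∀ u, u ∉ Icc (-1 : ℝ) 1 → K u = 0)
    (hc : 0 < c) {t : ℝ} (ht : K (t / c) ≠ 0) : |t| ≤ c := by
  have h := abs_le.2 (not_not.1 (mt (hK _) ht))
  rwa [abs_div, abs_of_pos hc, div_le_one hc] at h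

theorem abs_integral_kernelScale_mul_le {g : ℝ → ℝ} {w M : ℝ} {μ : Measure ℝ}
    (hK : Integrable K) (hc : c ≠ 0) (hμ : μ ≤ volume) (hM : 0 ≤ M)
    (hg : ∀ᵐ y ∂μ, K ((w - y) / c) ≠ 0 → |g y| ≤ M) :
    |∫ y, kernelScale K c (w - y) * g y ∂μ| ≤ (∫ t, |K t|) * M := by
  have hC : 0 ≤ ∫ t, |K t| := integral_nonneg fun _ => abs_nonneg _
  rw [← ENNReal.ofReal_le_ofReal_iff (mul_nonneg hC hM), ENNReal.ofReal_mul hC]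
  calc ENNReal.ofReal |∫ y, kernelScale K c (w - y) * g y ∂μ|
      ≤ ∫⁻ y, ENNReal.ofReal |kernelScale K c (w - y)| * ENNReal.ofReal M ∂μ :=
        ofReal_abs_integral_mul_le (hg.mono fun y hy hk => hy (right_ne_zero_of_mul hk))
    _ ≤ ∫⁻ y, ENNReal.ofReal |kernelScale K c (w - y)| * ENNReal.ofReal M :=
        lintegral_mono' hμ le_rfl
    _ = ENNReal.ofReal (∫ t, |K t|) * ENNReal.ofReal M := by
        rw [lintegral_mul_const' _ _ ENNReal.ofReal_ne_top,
          lintegral_sub_left_eq_self (fun t => ENNReal.ofReal |kernelScale K c t|),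
          lintegral_ofReal_abs_kernelScale hK hc]

theorem integral_abs_kernelScale_conv_comp_le {F F' Finv g δ : ℝ → ℝ} {B : ℝ}
    (hF : ∀ x, HasDerivAt F (F' x) x) (hF' : ∀ x, 0 < F' x) (hinv : LeftInverse Finv F)
    (hK : Integrable K) (hc : c ≠ 0) (hδ : Integrable δ) (hB : 0 ≤ B)
    (hg : ∀ u ∈ range F, ∀ y ∈ range F, K ((u - y) / c) ≠ 0 →
      |g y| / F' (Finv u) ≤ B * (|δ (Finv y)| / F' (Finv y))) :
    ∫ x, |∫ y in range F, kernelScale K c (F x - y) * g y| ≤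
      (∫ t, |K t|) * B * ∫ x, |δ x| := by
  have hs : MeasurableSet (range F) := measurableSet_range_of_continuous_injective
    (continuous_iff_continuousAt.2 fun x => (hF x).continuousAt) hinv.injective
  have hk : AEMeasurable (fun t => ENNReal.ofReal |kernelScale K c t|) :=
    (hK.kernelScale hc).aemeasurable.abs.ennreal_ofReal
  have hweight := aemeasurable_abs_comp_div_deriv hF hF' hinv hδ.aemeasurable
  refine integral_abs_le_of_lintegral_ofReal_abs_le (by positivity) ?_
  calc ∫⁻ x, ENNReal.ofReal |∫ y in range F, kernelScale K c (F x - y) * g y|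
      = ∫⁻ u in range F, ENNReal.ofReal
          (|∫ y in range F, kernelScale K c (u - y) * g y| / F' (Finv u)) :=
        lintegral_ofReal_comp_eq_setLIntegral_range hF hF' hinv
          fun u => |∫ y in range F, kernelScale K c (u - y) * g y|
    _ ≤ ∫⁻ u in range F, ∫⁻ y in range F, ENNReal.ofReal |kernelScale K c (u - y)| *
          ENNReal.ofReal (B * (|δ (Finv y)| / F' (Finv y))) := by
        refine setLIntegral_mono' hs fun u hu => ?_
        rw [← abs_of_pos (hF' (Finv u)), ← abs_div, ← integral_div]
        simp_rw [mul_div_assoc]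
        refine ofReal_abs_integral_mul_le (ae_restrict_of_forall_mem hs fun y hy hk => ?_)
        rw [abs_div, abs_of_pos (hF' (Finv u))]
        exact hg u hu y hy (right_ne_zero_of_mul hk)
    _ ≤ ∫⁻ u, ∫⁻ y in range F, ENNReal.ofReal |kernelScale K c (u - y)| *
          ENNReal.ofReal (B * (|δ (Finv y)| / F' (Finv y))) :=
        setLIntegral_le_lintegral _ _
    _ = ENNReal.ofReal ((∫ t, |K t|) * B * ∫ x, |δ x|) := by
        simp only [ENNReal.ofReal_mul hB]
        rw [lintegral_lintegral_sub_mul volume _ hk (hweight.ennreal_ofReal.const_mul _),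
          lintegral_const_mul' _ _ ENNReal.ofReal_ne_top,
          setLIntegral_range_ofReal_abs_comp_div_deriv hF hF' hinv hδ,
          lintegral_ofReal_abs_kernelScale hK hc, ← ENNReal.ofReal_mul (by positivity),
          ← ENNReal.ofReal_mul (by positivity), mul_assoc]

theorem integral_abs_kernelScale_conv_mul_div_le {F F' Finv a δ : ℝ → ℝ} {A f₁ : ℝ}
    (hF : ∀ x, HasDerivAt F (F' x) x) (hF' : ∀ x, 0 < F' x) (hinv : LeftInverse Finv F)
    (hK : Integrable K) (hc : c ≠ 0) (hδ : Integrable δ) (hA0 : 0 ≤ A) (hf₁ : 0 < f₁)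
    (hA : ∀ z, δ z ≠ 0 → |a z| ≤ A)
    (hlb : ∀ u ∈ range F, ∀ z, δ z ≠ 0 → K ((u - F z) / c) ≠ 0 → f₁ ≤ F' (Finv u)) :
    ∫ x, |∫ y in range F, kernelScale K c (F x - y) *
        (a (Finv y) * δ (Finv y) / F' (Finv y))| ≤ (∫ t, |K t|) * (A / f₁) * ∫ x, |δ x| := by
  refine integral_abs_kernelScale_conv_comp_le hF hF' hinv hK hc hδ (by positivity) ?_
  rintro u hu _ ⟨z, rfl⟩ hK
  rw [hinv z]
  by_cases hδz : δ z = 0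
  · simp [hδz]
  have hw : 0 ≤ |δ z| / F' z := div_nonneg (abs_nonneg _) (hF' z).le
  rw [abs_div, abs_mul, abs_of_pos (hF' z), mul_div_assoc]
  calc _ ≤ A * (|δ z| / F' z) / f₁ :=
        div_le_div₀ (mul_nonneg hA0 hw) (mul_le_mul_of_nonneg_right (hA z hδz) hw) hf₁
          (hlb u hu z hδz hK)
    _ = _ := by ring

end kernelScale

theorem psi_L1_bound_general (f K F Finv b δ : ℝ → ℝ) (Δ κ f₁ M : ℝ)
    (hf_pos : ∀ x, 0 < f x) (hf_cont : Continuous f)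
    (hf_int : Integrable f)
    (hF : ∀ x, F x = ∫ z in Set.Iic x, f z)
    (hF_bij : Set.BijOn F Set.univ (Set.Ioo (0:ℝ) 1))
    (hFinv : ∀ x, Finv (F x) = x)
    (hFinv' : ∀ y ∈ Set.Ioo (0:ℝ) 1, F (Finv y) = y)
    (hK_supp : ∀ u, u ∉ Set.Icc (-1:ℝ) 1 → K u = 0)
    (hK_int : Integrable K)
    (hδ_supp : ∀ x, x ∉ Set.Icc (-Δ) Δ → δ x = 0)
    (hδ_one : (∫ x, δ x) = 1) (hδ_L1 : (∫ x, |δ x|) ≤ 1)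
    (hΔ : 0 < Δ) (hκ : κ ∈ Set.Ioo (0:ℝ) 1) (hf₁ : 0 < f₁)
    (hf_lb : ∀ z ∈ Set.Icc (Finv ((1 - κ) * F (-Δ))) (Finv (κ + (1 - κ) * F Δ)),
      f₁ ≤ f z)
    (hM : ∀ z ∈ Set.Icc (Finv ((1 - κ) * F (-Δ))) (Finv (κ + (1 - κ) * F Δ)),
      |b z| ≤ M) :
    ∀ h ∈ Set.Ioc (0:ℝ) (κ * min (F (-Δ)) (1 - F Δ)),
    ∀ h' ∈ Set.Ioc (0:ℝ) (κ * min (F (-Δ)) (1 - F Δ)),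
      (∫ x, |∫ y in (0:ℝ)..1, h⁻¹ * K ((F x - y) / h) *
          ((∫ y' in (0:ℝ)..1, h'⁻¹ * K ((F (Finv y) - y') / h') * b (Finv y'))
            * δ (Finv y) / f (Finv y))|)
        ≤ (∫ u, |K u|) ^ 2 * M / f₁ := by
  rintro h ⟨hh, hhΔ⟩ h' ⟨hh', hh'Δ⟩
  have hFderiv : ∀ x, HasDerivAt F (f x) x := fun x => by
    rw [funext hF]; exact hasDerivAt_setIntegral_Iic hf_int hf_cont.continuousAt
  have hrange : range F = Ioo 0 1 := by rw [← image_univ, hF_bij.image_eq]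
  have hwindow := finv_mem_Icc_of_abs_sub_le (Δ := Δ)
    (strictMono_of_hasDerivAt_pos hFderiv hf_pos) (fun x => hF_bij.mapsTo (mem_univ x))
    hFinv' hκ.1.le hκ.2
  -- `I` is nonempty: it contains `F⁻¹ (F 0)`.
  have hM0 : 0 ≤ M := (abs_nonneg _).trans <| hM _ <|
    hwindow (z := 0) (t := F 0) ⟨neg_nonpos.2 hΔ.le, hΔ.le⟩ (by simpa using hh.le) hhΔ
  set C := ∫ t, |K t|
  have hC : 0 ≤ C := integral_nonneg fun _ => abs_nonneg _
  have hinner : ∀ z ∈ Icc (-Δ) Δ,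
      |∫ y' in (0:ℝ)..1, kernelScale K h' (F z - y') * b (Finv y')| ≤ C * M := fun z hz => by
    rw [intervalIntegral.integral_of_le zero_le_one]
    exact abs_integral_kernelScale_mul_le hK_int hh'.ne' Measure.restrict_le_self hM0
      (ae_of_all _ fun y' hK => hM _ <|
        hwindow hz (abs_le_of_apply_div_ne_zero hK_supp hh' hK) hh'Δ)
  have hsupp : ∀ z, δ z ≠ 0 → z ∈ Icc (-Δ) Δ := fun z => not_imp_comm.1 (hδ_supp z)
  have hbound := integral_abs_kernelScale_conv_mul_div_le hFderiv hf_pos hFinv hK_int hh.ne'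
    (.of_integral_ne_zero (by rw [hδ_one]; exact one_ne_zero)) (mul_nonneg hC hM0) hf₁
    (a := fun z => ∫ y' in (0:ℝ)..1, kernelScale K h' (F z - y') * b (Finv y'))
    (fun z hz => hinner z (hsupp z hz)) fun u _ z hz hK => hf_lb _ <| hwindow (hsupp z hz)
      (by rw [abs_sub_comm]; exact abs_le_of_apply_div_ne_zero hK_supp hh hK) hhΔ
  simp only [hrange, ← integral_Ioc_eq_integral_Ioo,
    ← intervalIntegral.integral_of_le zero_le_one] at hbound
  refine hbound.trans ?_
  calc C * (C * M / f₁) * ∫ x, |δ x| ≤ C * (C * M / f₁) * 1 := by gcongr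
    _ = C ^ 2 * M / f₁ := by ring

/-- `∫ |ψ_{h,h'}| ≤ ‖K‖₁² (sup_I |b|) / f₁`, where
`ψ_{h,h'}(x) = [K_h ∗ ((b_{h'}·δ/f)∘F⁻¹ · 𝟙_(0,1))](F(x))` and
`b_{h'}(z) = [K_{h'} ∗ ((b∘F⁻¹)𝟙_(0,1))](F(z))`. -/
theorem psi_L1_bound (f K F Finv b δ : ℝ → ℝ) (Δ κ f₁ M : ℝ)
    (hf_pos : ∀ x, 0 < f x) (hf_cont : Continuous f)
    (hf_int : Integrable f) (hf_one : (∫ x, f x) = 1)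
    (hF : ∀ x, F x = ∫ z in Set.Iic x, f z)
    (hF_bij : Set.BijOn F Set.univ (Set.Ioo (0:ℝ) 1))
    (hFinv : ∀ x, Finv (F x) = x)
    (hFinv' : ∀ y ∈ Set.Ioo (0:ℝ) 1, F (Finv y) = y)
    (hK_supp : ∀ u, u ∉ Set.Icc (-1:ℝ) 1 → K u = 0)
    (hK_int : Integrable K)
    (hδ_nonneg : ∀ x, 0 ≤ δ x)
    (hδ_supp : ∀ x, x ∉ Set.Icc (-Δ) Δ → δ x = 0)
    (hδ_one : (∫ x, δ x) = 1) (hδ_L1 : (∫ x, |δ x|) ≤ 1)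
    (hΔ : 0 < Δ) (hκ : κ ∈ Set.Ioo (0:ℝ) 1) (hf₁ : 0 < f₁)
    (hf_lb : ∀ z ∈ Set.Icc (Finv ((1 - κ) * F (-Δ))) (Finv (κ + (1 - κ) * F Δ)),
      f₁ ≤ f z)
    (hM : ∀ z ∈ Set.Icc (Finv ((1 - κ) * F (-Δ))) (Finv (κ + (1 - κ) * F Δ)),
      |b z| ≤ M) :
    ∀ h ∈ Set.Ioc (0:ℝ) (κ * min (F (-Δ)) (1 - F Δ)),
    ∀ h' ∈ Set.Ioc (0:ℝ) (κ * min (F (-Δ)) (1 - F Δ)),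
      (∫ x, |∫ y in (0:ℝ)..1, h⁻¹ * K ((F x - y) / h) *
          ((∫ y' in (0:ℝ)..1, h'⁻¹ * K ((F (Finv y) - y') / h') * b (Finv y'))
            * δ (Finv y) / f (Finv y))|)
        ≤ (∫ u, |K u|) ^ 2 * M / f₁ :=
  psi_L1_bound_general f K F Finv b δ Δ κ f₁ M hf_pos hf_cont hf_int hF hF_bij hFinv hFinv' hK_supp
    hK_int hδ_supp hδ_one hδ_L1 hΔ hκ hf₁ hf_lb hM
end
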